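/- arXiv:2306.05724 — 3 statements merged into one kernel-verified Lean document; each statement's English description precedes it below -/
import Mathlib

section
/- Under the marginalized entropy game, Shapley values sum to the difference between local and global conditional entropy: for every x ∈ X, Σ_{j ∈ Fin d} φ_{v_{H*}}(j, x) = H(Y|x) − H(Y|X), where H(Y|x) := −Σ_y p(y|x) · log p(y|x) and H(Y|X) := Σ_{x'} P(x') · H(Y|x'). -/
/-!
Shapley values are efficient: summed over the players they telescope to `v(univ) - v(∅)`,
because after double counting every coalition `T` other than `∅` and `univ` gets the weight
`|T|! (d - |T|)! / d!` from both the marginal contributions it receives and those it gives.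
For `v_{H*}`, conditioning on all features leaves only `x' = x`, so `v_{H*}(univ, x) = H(Y|x)`,
while conditioning on none averages `H(Y|x')` against `P`, so `v_{H*}(∅, x) = H(Y|X)`.
-/

open Finset Real

noncomputable section

/-- Conditional pmf `p(y | x_S)` in the finite discrete setting. -/
def condP {d : ℕ} {Xf : Fin d → Type*} {Y : Type*} [∀ j, Fintype (Xf j)] [Fintype Y]
    [∀ j, DecidableEq (Xf j)]
    (p : ((∀ j, Xf j) × Y) → ℝ) (S : Finset (Fin d)) (x : ∀ j, Xf j) (y : Y) : ℝ :=
  (∑ x' : ∀ j, Xf j, if ∀ j ∈ S, x' j = x j then p (x', y) else 0) /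
  (∑ x' : ∀ j, Xf j, if ∀ j ∈ S, x' j = x j then ∑ y' : Y, p (x', y') else 0)

/-- Marginal feature pmf `P(x)`. -/
def margP {d : ℕ} {Xf : Fin d → Type*} {Y : Type*} [Fintype Y]
    (p : ((∀ j, Xf j) × Y) → ℝ) (x : ∀ j, Xf j) : ℝ :=
  ∑ y : Y, p (x, y)

/-- Local conditional entropy `H(Y | x_S)`. -/
def entY {d : ℕ} {Xf : Fin d → Type*} {Y : Type*} [∀ j, Fintype (Xf j)] [Fintype Y]
    [∀ j, DecidableEq (Xf j)]
    (p : ((∀ j, Xf j) × Y) → ℝ) (S : Finset (Fin d)) (x : ∀ j, Xf j) : ℝ :=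
  -∑ y : Y, condP p S x y * Real.log (condP p S x y)

/-- The KL-divergence game `v_KL(S, x) = -D_KL(p(Y|x) ‖ p(Y|x_S))`. -/
def vKL {d : ℕ} {Xf : Fin d → Type*} {Y : Type*} [∀ j, Fintype (Xf j)] [Fintype Y]
    [∀ j, DecidableEq (Xf j)]
    (p : ((∀ j, Xf j) × Y) → ℝ) (S : Finset (Fin d)) (x : ∀ j, Xf j) : ℝ :=
  -∑ y : Y, condP p Finset.univ x y *
      Real.log (condP p Finset.univ x y / condP p S x y)

/-- The cross-entropy game `v_CE(S, x) = -H(p(Y|x), p(Y|x_S))`. -/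
def vCE {d : ℕ} {Xf : Fin d → Type*} {Y : Type*} [∀ j, Fintype (Xf j)] [Fintype Y]
    [∀ j, DecidableEq (Xf j)]
    (p : ((∀ j, Xf j) × Y) → ℝ) (S : Finset (Fin d)) (x : ∀ j, Xf j) : ℝ :=
  ∑ y : Y, condP p Finset.univ x y * Real.log (condP p S x y)

/-- The information-gain game `v_IG(S, x) = -H(Y | x_S)`. -/
def vIG {d : ℕ} {Xf : Fin d → Type*} {Y : Type*} [∀ j, Fintype (Xf j)] [Fintype Y]
    [∀ j, DecidableEq (Xf j)]
    (p : ((∀ j, Xf j) × Y) → ℝ) (S : Finset (Fin d)) (x : ∀ j, Xf j) : ℝ :=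
  -entY p S x

/-- The local entropy game `v_H(S, x) = H(Y | x_S)`. -/
def vH {d : ℕ} {Xf : Fin d → Type*} {Y : Type*} [∀ j, Fintype (Xf j)] [Fintype Y]
    [∀ j, DecidableEq (Xf j)]
    (p : ((∀ j, Xf j) × Y) → ℝ) (S : Finset (Fin d)) (x : ∀ j, Xf j) : ℝ :=
  entY p S x

/-- The marginalized entropy game
`v_{H*}(S, x) = E[H(Y | x') | x'_S = x_S] = ∑_{x' : x'_S = x_S} P(x' | x_S) H(Y|x')`. -/
def vHstar {d : ℕ} {Xf : Fin d → Type*} {Y : Type*} [∀ j, Fintype (Xf j)] [Fintype Y]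
    [∀ j, DecidableEq (Xf j)]
    (p : ((∀ j, Xf j) × Y) → ℝ) (S : Finset (Fin d)) (x : ∀ j, Xf j) : ℝ :=
  ∑ x' : ∀ j, Xf j,
    if ∀ j ∈ S, x' j = x j then
      (margP p x' /
          ∑ x'' : ∀ j, Xf j, if ∀ j ∈ S, x'' j = x j then margP p x'' else 0) *
        entY p Finset.univ x'
    else 0

/-- The Shapley value `φ_v(j, x)` of feature `j` at point `x` for the game `v`. -/
def shapley {d : ℕ} {X : Type*} (v : Finset (Fin d) → X → ℝ) (j : Fin d) (x : X) : ℝ :=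
  ∑ S ∈ (Finset.univ.erase j).powerset,
    ((S.card.factorial : ℝ) * ((d - S.card - 1).factorial : ℝ) / (d.factorial : ℝ)) *
      (v (insert j S) x - v S x)

section Shapley

variable {α β : Type*} [Fintype α] [DecidableEq α] [AddCommMonoid β]

theorem sum_sum_powerset_erase_insert (F : ℕ → Finset α → β) :
    ∑ j, ∑ S ∈ (univ.erase j).powerset, F S.card (insert j S) =
      ∑ T : Finset α, T.card • F (T.card - 1) T := by
  have hinsert (j : α) : ∑ S ∈ (univ.erase j).powerset, F S.card (insert j S) =
      ∑ T ∈ univ.filter (j ∈ ·), F (T.card - 1) T := by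
    refine sum_nbij' (insert j) (·.erase j) ?_ ?_ ?_ ?_ ?_ <;>
      simp +contextual [subset_erase, card_insert_of_notMem]
  simp_rw [hinsert]
  rw [sum_comm' (t' := univ) (s' := id) (by simp)]
  simp [sum_const]

theorem sum_sum_powerset_erase (G : Finset α → β) :
    ∑ j, ∑ S ∈ (univ.erase j).powerset, G S =
      ∑ S : Finset α, (Fintype.card α - S.card) • G S := by
  rw [sum_comm' (t' := univ) (s' := (·ᶜ)) (by simp [subset_erase, and_comm])]
  simp [sum_const, card_compl]

end Shapley

def shapleyWeight (d k : ℕ) : ℝ :=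
  (k.factorial : ℝ) * ((d - k - 1).factorial : ℝ) / (d.factorial : ℝ)

theorem shapley_eq_sum_shapleyWeight {d : ℕ} {X : Type*} (v : Finset (Fin d) → X → ℝ) (j : Fin d)
    (x : X) : shapley v j x =
      ∑ S ∈ (univ.erase j).powerset, shapleyWeight d S.card * (v (insert j S) x - v S x) :=
  rfl

theorem natCast_mul_shapleyWeight_pred (d k : ℕ) :
    (k : ℝ) * shapleyWeight d (k - 1) =
      k.factorial * (d - k).factorial / d.factorial - if k = 0 then 1 else 0 := by
  rcases eq_or_ne k 0 with rfl | hk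
  · simp [shapleyWeight, d.factorial_ne_zero]
  · rw [shapleyWeight, if_neg hk, sub_zero, Nat.sub_sub,
      Nat.sub_add_cancel (Nat.one_le_iff_ne_zero.2 hk), ← Nat.mul_factorial_pred hk]
    push_cast
    ring

theorem natCast_sub_mul_shapleyWeight {d k : ℕ} (hk : k ≤ d) :
    ((d - k : ℕ) : ℝ) * shapleyWeight d k =
      k.factorial * (d - k).factorial / d.factorial - if k = d then 1 else 0 := by
  rcases eq_or_ne k d with rfl | hkd
  · simp [shapleyWeight, k.factorial_ne_zero]
  · rw [shapleyWeight, if_neg hkd, sub_zero,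
      ← Nat.mul_factorial_pred (Nat.sub_ne_zero_of_lt (lt_of_le_of_ne hk hkd))]
    push_cast
    ring

theorem sum_shapley {d : ℕ} {X : Type*} (v : Finset (Fin d) → X → ℝ) (x : X) :
    ∑ j, shapley v j x = v univ x - v ∅ x := by
  have hcard (T : Finset (Fin d)) : #T ≤ d := by simpa using card_le_univ T
  have heq (T : Finset (Fin d)) : #T = d ↔ T = univ := by
    simpa using card_eq_iff_eq_univ T
  simp only [shapley_eq_sum_shapleyWeight, mul_sub, sum_sub_distrib]
  rw [sum_sum_powerset_erase_insert (fun k T => shapleyWeight d k * v T x),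
    sum_sum_powerset_erase (fun S => shapleyWeight d S.card * v S x)]
  simp only [nsmul_eq_mul, ← mul_assoc, natCast_mul_shapleyWeight_pred, Fintype.card_fin,
    natCast_sub_mul_shapleyWeight (hcard _), card_eq_zero, heq, sub_mul, ite_mul, one_mul,
    zero_mul, sum_sub_distrib, sum_ite_eq']
  simp

section MarginalizedEntropy

variable {d : ℕ} {Xf : Fin d → Type*} {Y : Type*} [Fintype Y] (p : ((∀ j, Xf j) × Y) → ℝ)

theorem margP_pos [Nonempty Y] (hpos : ∀ z, 0 < p z) (x : ∀ j, Xf j) : 0 < margP p x :=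
  sum_pos (fun _ _ => hpos _) univ_nonempty

variable [∀ j, Fintype (Xf j)]

theorem sum_margP : ∑ x, margP p x = ∑ z, p z :=
  (Fintype.sum_prod_type p).symm

variable [∀ j, DecidableEq (Xf j)]

theorem vHstar_univ {x : ∀ j, Xf j} (hx : margP p x ≠ 0) :
    vHstar p univ x = entY p univ x := by
  simp [vHstar, ← funext_iff, hx]

theorem vHstar_empty (hsum : ∑ z, p z = 1) (x : ∀ j, Xf j) :
    vHstar p ∅ x = ∑ x', margP p x' * entY p univ x' := by
  simp [vHstar, sum_margP, hsum]

end MarginalizedEntropy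

theorem shapley_hstar_sum_general {d : ℕ} {Xf : Fin d → Type*} {Y : Type*}
    [∀ j, Fintype (Xf j)] [∀ j, DecidableEq (Xf j)]
    [Fintype Y] [Nonempty Y]
    (p : ((∀ j, Xf j) × Y) → ℝ)
    (hpos : ∀ z : ((∀ j, Xf j) × Y), 0 < p z)
    (hsum : ∑ z : ((∀ j, Xf j) × Y), p z = 1)
    (x : ∀ j, Xf j) :
    ∑ j : Fin d, shapley (vHstar p) j x =
      entY p Finset.univ x -
        ∑ x' : ∀ j, Xf j, margP p x' * entY p Finset.univ x' := by
  rw [sum_shapley, vHstar_univ p (margP_pos p hpos x).ne', vHstar_empty p hsum]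

/-- under the marginalized entropy game, Shapley values sum to
`H(Y|x) - H(Y|X)`. -/
theorem shapley_hstar_sum {d : ℕ} (hd : 1 ≤ d) {Xf : Fin d → Type*} {Y : Type*}
    [∀ j, Fintype (Xf j)] [∀ j, Nonempty (Xf j)] [∀ j, DecidableEq (Xf j)]
    [Fintype Y] [Nonempty Y]
    (p : ((∀ j, Xf j) × Y) → ℝ)
    (hpos : ∀ z : ((∀ j, Xf j) × Y), 0 < p z)
    (hsum : ∑ z : ((∀ j, Xf j) × Y), p z = 1)
    (x : ∀ j, Xf j) :
    ∑ j : Fin d, shapley (vHstar p) j x =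
      entY p Finset.univ x -
        ∑ x' : ∀ j, Xf j, margP p x' * entY p Finset.univ x' :=
  shapley_hstar_sum_general p hpos hsum x
end
end

section
/- The population average of the marginal contribution in the information-gain game equals the conditional mutual information of Y and X_j given X_S and is hence nonnegative: for every j ∈ Fin d and S ⊆ Fin d with j ∉ S, Σ_x P(x) · Δ_{v_IG}(S, j, x) = H(Y|X_S) − H(Y|X_{S∪{j}}), where H(Y|X_S) := Σ_x P(x) · H(Y|x_S), and this common value is ≥ 0. -/
open Finset Real

noncomputable section

/-!
By the tower property of conditioning, the average local entropy `∑ₓ P(x) H(Y | x_W)` is the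
cross-entropy `-∑ₓ,ᵧ p(x, y) log p(y | x_W)`. For `S ⊆ T` the difference of two such averages
is therefore `∑ₓ P(x) KL(p(· | x_T) ‖ p(· | x_S))`, which is nonnegative by Gibbs' inequality
`q - r ≤ q log (q / r)`.
-/

section ClassSum

variable {α : Type*} [Fintype α] (r : α → α → Prop) [DecidableRel r]

def classSum (g : α → ℝ) (x : α) : ℝ :=
  ∑ x', if r x' x then g x' else 0

variable {r}

theorem classSum_pos (hr : ∀ x, r x x) {g : α → ℝ} (hg : ∀ x, 0 < g x) (x : α) :
    0 < classSum r g x :=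
  Finset.sum_pos' (fun x' _ => by split_ifs <;> simp [(hg x').le])
    ⟨x, Finset.mem_univ x, by simp [hr x, hg x]⟩

theorem classSum_congr (hr : Equivalence r) (g : α → ℝ) {x x' : α} (h : r x x') :
    classSum r g x = classSum r g x' :=
  Finset.sum_congr rfl fun _ _ =>
    if_congr ⟨fun hz => hr.trans hz h, fun hz => hr.trans hz (hr.symm h)⟩ rfl rfl

theorem sum_classSum {ι : Type*} (s : Finset ι) (g : ι → α → ℝ) (x : α) :
    ∑ i ∈ s, classSum r (g i) x = classSum r (fun x' => ∑ i ∈ s, g i x') x := by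
  simp only [classSum]
  rw [Finset.sum_comm]
  exact Finset.sum_congr rfl fun x' _ => (Finset.sum_ite_irrel _ _ _ _).trans (by simp)

/-- Tower property for the partition into `r`-classes. -/
theorem sum_mul_classSum_div_mul (hr : Equivalence r) {g : α → ℝ} (h : α → ℝ)
    (hg : ∀ x, classSum r g x ≠ 0) {F : α → ℝ} (hF : ∀ x x', r x x' → F x = F x') :
    ∑ x, g x * (classSum r h x / classSum r g x) * F x = ∑ x, h x * F x := by
  have hterm : ∀ x x', (if r x' x then g x * h x' * F x / classSum r g x else 0) =
      (if r x x' then g x else 0) * (h x' * F x' / classSum r g x') := by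
    intro x x'
    by_cases hxx' : r x' x
    · rw [if_pos hxx', if_pos (hr.symm hxx'), hF x x' (hr.symm hxx'),
        classSum_congr hr g (hr.symm hxx')]
      ring
    · rw [if_neg hxx', if_neg fun h' => hxx' (hr.symm h'), zero_mul]
  calc ∑ x, g x * (classSum r h x / classSum r g x) * F x
      = ∑ x, ∑ x', if r x' x then g x * h x' * F x / classSum r g x else 0 := by
        refine Finset.sum_congr rfl fun x _ => ?_
        simp only [classSum, mul_div_assoc', Finset.sum_mul, Finset.mul_sum, Finset.sum_div]
        exact Finset.sum_congr rfl fun x' _ => by split_ifs <;> ring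
    _ = ∑ x, ∑ x', (if r x x' then g x else 0) * (h x' * F x' / classSum r g x') :=
        Finset.sum_congr rfl fun x _ => Finset.sum_congr rfl fun x' _ => hterm x x'
    _ = ∑ x', classSum r g x' * (h x' * F x' / classSum r g x') := by
        rw [Finset.sum_comm]
        simp only [classSum, Finset.sum_mul]
    _ = ∑ x, h x * F x :=
        Finset.sum_congr rfl fun x _ => by field_simp [hg x]

end ClassSum

theorem sum_mul_log_div_nonneg {ι : Type*} (s : Finset ι) {q r : ι → ℝ}
    (hq : ∀ i ∈ s, 0 < q i) (hr : ∀ i ∈ s, 0 < r i)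
    (hsum : ∑ i ∈ s, r i ≤ ∑ i ∈ s, q i) :
    0 ≤ ∑ i ∈ s, q i * Real.log (q i / r i) := by
  have hpoint : ∀ i ∈ s, q i - r i ≤ q i * Real.log (q i / r i) := by
    intro i hi
    have := Real.one_sub_inv_le_log_of_pos (div_pos (hq i hi) (hr i hi))
    rw [inv_div] at this
    calc q i - r i = q i * (1 - r i / q i) := by field_simp [(hq i hi).ne']
      _ ≤ q i * Real.log (q i / r i) := mul_le_mul_of_nonneg_left this (hq i hi).le
  have := Finset.sum_le_sum hpoint
  rw [Finset.sum_sub_distrib] at this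
  linarith

section CondP

variable {d : ℕ} {Xf : Fin d → Type*}

/-- Reducible, so that `DecidableRel (agreeOn W)` finds the instance that `condP` uses. -/
abbrev agreeOn (W : Finset (Fin d)) (x' x : ∀ j, Xf j) : Prop :=
  ∀ i ∈ W, x' i = x i

theorem agreeOn_equivalence (W : Finset (Fin d)) : Equivalence (agreeOn (Xf := Xf) W) where
  refl _ _ _ := rfl
  symm h i hi := (h i hi).symm
  trans h h' i hi := (h i hi).trans (h' i hi)

theorem agreeOn_mono {V W : Finset (Fin d)} (hVW : V ⊆ W) {x' x : ∀ j, Xf j}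
    (h : agreeOn W x' x) : agreeOn V x' x :=
  fun i hi => h i (hVW hi)

variable {Y : Type*} [∀ j, Fintype (Xf j)] [Fintype Y] [∀ j, DecidableEq (Xf j)]

theorem condP_eq_div (p : ((∀ j, Xf j) × Y) → ℝ) (W : Finset (Fin d)) (x : ∀ j, Xf j)
    (y : Y) : condP p W x y = classSum (agreeOn W) (fun x' => p (x', y)) x /
      classSum (agreeOn W) (margP p) x :=
  rfl

theorem condP_congr (p : ((∀ j, Xf j) × Y) → ℝ) (W : Finset (Fin d)) {x x' : ∀ j, Xf j}
    (h : agreeOn W x x') (y : Y) : condP p W x y = condP p W x' y := by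
  simp only [condP_eq_div, classSum_congr (agreeOn_equivalence W) _ h]

variable [Nonempty Y] {p : ((∀ j, Xf j) × Y) → ℝ}

theorem classSum_margP_pos (hpos : ∀ z, 0 < p z) (W : Finset (Fin d)) (x : ∀ j, Xf j) :
    0 < classSum (agreeOn W) (margP p) x :=
  classSum_pos (agreeOn_equivalence W).refl
    (fun x' => Finset.sum_pos (fun y _ => hpos (x', y)) Finset.univ_nonempty) x

theorem condP_pos (hpos : ∀ z, 0 < p z) (W : Finset (Fin d)) (x : ∀ j, Xf j) (y : Y) :
    0 < condP p W x y :=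
  div_pos (classSum_pos (agreeOn_equivalence W).refl (fun x' => hpos (x', y)) x)
    (classSum_margP_pos hpos W x)

theorem sum_condP (hpos : ∀ z, 0 < p z) (W : Finset (Fin d)) (x : ∀ j, Xf j) :
    ∑ y, condP p W x y = 1 := by
  simp only [condP_eq_div, ← Finset.sum_div, sum_classSum]
  exact div_self (classSum_margP_pos hpos W x).ne'

theorem sum_margP_mul_condP_mul (hpos : ∀ z, 0 < p z) (W : Finset (Fin d)) (y : Y)
    {F : (∀ j, Xf j) → ℝ} (hF : ∀ x x', agreeOn W x x' → F x = F x') :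
    ∑ x, margP p x * condP p W x y * F x = ∑ x, p (x, y) * F x :=
  sum_mul_classSum_div_mul (agreeOn_equivalence W) (fun x => p (x, y))
    (fun x => (classSum_margP_pos hpos W x).ne') hF

theorem sum_margP_mul_entY (hpos : ∀ z, 0 < p z) (W : Finset (Fin d)) :
    ∑ x, margP p x * entY p W x = -∑ y, ∑ x, p (x, y) * Real.log (condP p W x y) := by
  simp only [entY, mul_neg, Finset.sum_neg_distrib, Finset.mul_sum, ← mul_assoc]
  rw [Finset.sum_comm]
  exact congrArg _ <| Finset.sum_congr rfl fun y _ =>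
    sum_margP_mul_condP_mul hpos W y fun x x' h => by rw [condP_congr p W h]

theorem sum_margP_mul_entY_sub (hpos : ∀ z, 0 < p z) {S T : Finset (Fin d)} (hST : S ⊆ T) :
    ∑ x, margP p x * entY p S x - ∑ x, margP p x * entY p T x =
      ∑ x, margP p x *
        ∑ y, condP p T x y * Real.log (condP p T x y / condP p S x y) := by
  have hlocal : ∀ y x x', agreeOn T x x' →
      Real.log (condP p T x y / condP p S x y) = Real.log (condP p T x' y / condP p S x' y) :=
    fun y x x' h => by rw [condP_congr p T h, condP_congr p S (agreeOn_mono hST h)]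
  simp only [Finset.mul_sum, ← mul_assoc]
  rw [Finset.sum_comm, sum_margP_mul_entY hpos, sum_margP_mul_entY hpos, neg_sub_neg,
    ← Finset.sum_sub_distrib]
  refine Finset.sum_congr rfl fun y _ => ?_
  rw [sum_margP_mul_condP_mul hpos T y (hlocal y), ← Finset.sum_sub_distrib]
  refine Finset.sum_congr rfl fun x _ => ?_
  rw [Real.log_div (condP_pos hpos T x y).ne' (condP_pos hpos S x y).ne']
  ring

end CondP

theorem avg_ig_marginal_contribution_general {d : ℕ} {Xf : Fin d → Type*} {Y : Type*}
    [∀ j, Fintype (Xf j)] [∀ j, DecidableEq (Xf j)]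
    [Fintype Y] [Nonempty Y]
    (p : ((∀ j, Xf j) × Y) → ℝ)
    (hpos : ∀ z : ((∀ j, Xf j) × Y), 0 < p z)
    (j : Fin d) (S : Finset (Fin d)) :
    (∑ x : ∀ j, Xf j,
        margP p x * (vIG p (insert j S) x - vIG p S x) =
      (∑ x : ∀ j, Xf j, margP p x * entY p S x) -
        ∑ x : ∀ j, Xf j, margP p x * entY p (insert j S) x) ∧
    0 ≤ ∑ x : ∀ j, Xf j,
        margP p x * (vIG p (insert j S) x - vIG p S x) := by
  have havg : ∑ x : ∀ j, Xf j, margP p x * (vIG p (insert j S) x - vIG p S x) =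
      (∑ x : ∀ j, Xf j, margP p x * entY p S x) -
        ∑ x : ∀ j, Xf j, margP p x * entY p (insert j S) x := by
    rw [← Finset.sum_sub_distrib]
    exact Finset.sum_congr rfl fun x _ => by simp only [vIG]; ring
  refine ⟨havg, ?_⟩
  rw [havg, sum_margP_mul_entY_sub hpos (Finset.subset_insert j S)]
  refine Finset.sum_nonneg fun x _ => mul_nonneg ?_ ?_
  · exact Finset.sum_nonneg fun y _ => (hpos (x, y)).le
  · exact sum_mul_log_div_nonneg _ (fun y _ => condP_pos hpos _ x y)
      (fun y _ => condP_pos hpos _ x y) (by rw [sum_condP hpos, sum_condP hpos])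

/-- the population average of the information-gain marginal contribution
equals the conditional mutual information `H(Y|X_S) - H(Y|X_(S∪j))` and is
nonnegative. -/
theorem avg_ig_marginal_contribution {d : ℕ} (hd : 1 ≤ d) {Xf : Fin d → Type*} {Y : Type*}
    [∀ j, Fintype (Xf j)] [∀ j, Nonempty (Xf j)] [∀ j, DecidableEq (Xf j)]
    [Fintype Y] [Nonempty Y]
    (p : ((∀ j, Xf j) × Y) → ℝ)
    (hpos : ∀ z : ((∀ j, Xf j) × Y), 0 < p z)
    (hsum : ∑ z : ((∀ j, Xf j) × Y), p z = 1)
    (j : Fin d) (S : Finset (Fin d)) (hjS : j ∉ S) :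
    (∑ x : ∀ j, Xf j,
        margP p x * (vIG p (insert j S) x - vIG p S x) =
      (∑ x : ∀ j, Xf j, margP p x * entY p S x) -
        ∑ x : ∀ j, Xf j, margP p x * entY p (insert j S) x) ∧
    0 ≤ ∑ x : ∀ j, Xf j,
        margP p x * (vIG p (insert j S) x - vIG p S x) :=
  avg_ig_marginal_contribution_general p hpos j S
end
end

section
/- Exchangeable rank bound: let φ_1, …, φ_m, φ_{m+1} be i.i.d. real-valued random variables on a probability space (Ω, F, P) with m ≥ 1, and let 1 ≤ k ≤ m. For each ω ∈ Ω, let φ_{(k)}(ω) denote the k-th smallest value (counted with multiplicity) among φ_1(ω), …, φ_m(ω). Then P( φ_{m+1} ≤ φ_{(k)} ) ≥ k/(m+1). -/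
/-!
Let `rank j = lowerCount φ (φ j)` be the number of the `m + 1` values strictly below `φ_j`. For
every outcome at least `k` indices have `rank < k`: otherwise the smallest value outside them would
have fewer than `k` values below it. So the `m + 1` events `{rank j < k}` have probabilities summing
to at least `k`. The law of `(φ_1, …, φ_{m+1})` is a product measure, hence invariant under
permuting coordinates, so these events are equally likely. Finally `φ_{m+1} ≤ φ_{(k)}` is exactly
the event `{rank (m+1) < k}`.
-/

open Finset Real

noncomputable section

/-- The `k`-th smallest value (counted with multiplicity) among `g 0, …, g (m-1)`. -/
noncomputable def orderStat (m : ℕ) (g : Fin m → ℝ) (k : ℕ) : ℝ :=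
  (List.insertionSort (· ≤ ·) (List.ofFn g)).getD (k - 1) 0

def lowerCount {ι α : Type*} [Fintype ι] [LinearOrder α] (g : ι → α) (x : α) : ℕ :=
  #{i | g i < x}

section LowerCount

variable {ι α : Type*} [Fintype ι] [LinearOrder α]

theorem lowerCount_comp_perm (g : ι → α) (σ : Equiv.Perm ι) (x : α) :
    lowerCount (g ∘ σ) x = lowerCount g x :=
  card_equiv σ (by simp)

theorem lowerCount_eq_countP {n : ℕ} (g : Fin n → α) (x : α) :
    lowerCount g x = (List.ofFn g).countP (· < x) := by
  rw [lowerCount, ← Multiset.coe_countP, ← Fin.univ_val_map, Multiset.countP_map]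
  rfl

theorem lowerCount_castSucc_last {n : ℕ} (g : Fin (n + 1) → α) :
    lowerCount (fun i : Fin n => g i.castSucc) (g (Fin.last n)) =
      lowerCount g (g (Fin.last n)) := by
  simp only [lowerCount, card_filter, Fin.sum_univ_castSucc, lt_irrefl, if_false, add_zero]

theorem Monotone.le_apply_iff_lowerCount_le {n : ℕ} {f : Fin n → α} (hf : Monotone f) (x : α)
    (j : Fin n) : x ≤ f j ↔ lowerCount f x ≤ j := by
  constructor
  · intro hx
    calc lowerCount f x ≤ #(Iio j) :=
          card_le_card fun i hi => mem_Iio.2 (hf.reflect_lt ((mem_filter.1 hi).2.trans_le hx))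
      _ = j := Fin.card_Iio j
  · intro hcard
    by_contra! hx
    have : #(Iic j) ≤ lowerCount f x :=
      card_le_card fun i hi => mem_filter.2 ⟨mem_univ _, (hf (mem_Iic.1 hi)).trans_lt hx⟩
    rw [Fin.card_Iic] at this
    omega

theorem le_card_filter_lowerCount_lt (g : ι → α) {k : ℕ} (hk : k ≤ Fintype.card ι) :
    k ≤ #{j | lowerCount g (g j) < k} := by
  classical
  set T : Finset ι := {j | lowerCount g (g j) < k}
  by_contra! hT
  obtain ⟨j₀, hj₀, hmin⟩ := exists_min_image Tᶜ g (by rw [← card_pos, card_compl]; omega)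
  have hsub : ({i | g i < g j₀} : Finset ι) ⊆ T := fun i hi => by
    by_contra hiT
    exact (hmin i (mem_compl.2 hiT)).not_gt (mem_filter.1 hi).2
  exact mem_compl.1 hj₀ (mem_filter.2 ⟨mem_univ _, (card_le_card hsub).trans_lt hT⟩)

end LowerCount

theorem le_orderStat_iff {m : ℕ} (g : Fin m → ℝ) (x : ℝ) {k : ℕ} (hk1 : 1 ≤ k) (hkm : k ≤ m) :
    x ≤ orderStat m g k ↔ lowerCount g x < k := by
  set s := List.insertionSort (· ≤ ·) (List.ofFn g)
  have hlen : s.length = m := by simp [s]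
  have hcount : lowerCount s.get x = lowerCount g x := by
    rw [lowerCount_eq_countP, lowerCount_eq_countP, List.ofFn_get,
      (List.perm_insertionSort _ _).countP_eq]
  have hk : orderStat m g k = s.get ⟨k - 1, by omega⟩ := List.getD_eq_getElem _ _ _
  rw [hk, List.sortedLE_insertionSort.monotone_get.le_apply_iff_lowerCount_le, hcount]
  change _ ≤ k - 1 ↔ _
  omega

open MeasureTheory
open scoped ENNReal

open Classical in
theorem MeasureTheory.natCast_mul_measure_univ_le_sum_measure {ι Ω : Type*} [Fintype ι]
    [MeasurableSpace Ω] (μ : Measure Ω) {s : ι → Set Ω} (hs : ∀ i, MeasurableSet (s i)) {k : ℕ}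
    (hk : ∀ ω, k ≤ #{i | ω ∈ s i}) : k * μ Set.univ ≤ ∑ i, μ (s i) :=
  calc (k : ℝ≥0∞) * μ Set.univ = ∫⁻ _, (k : ℝ≥0∞) ∂μ := by simp
    _ ≤ ∫⁻ ω, ∑ i, (s i).indicator 1 ω ∂μ := lintegral_mono fun ω => by
        simpa [Set.indicator_apply, Finset.sum_boole] using hk ω
    _ = ∑ i, μ (s i) := by
        rw [lintegral_finsetSum _ fun i _ => measurable_one.indicator (hs i)]
        simp_rw [lintegral_indicator_one (hs _)]

section Exchangeable

variable {ι α : Type*} [MeasurableSpace α]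

def IsExchangeable (ν : Measure (ι → α)) : Prop :=
  ∀ σ : Equiv.Perm ι, ν.map (fun g => g ∘ σ) = ν

theorem MeasurableEquiv.coe_piCongrLeft_perm_symm (σ : Equiv.Perm ι) :
    ⇑(MeasurableEquiv.piCongrLeft (fun _ : ι => α) σ.symm) = fun g => g ∘ σ := by
  ext g i
  simp [MeasurableEquiv.coe_piCongrLeft, Equiv.piCongrLeft_apply]

theorem isExchangeable_pi [Fintype ι] (μ : Measure α) [SigmaFinite μ] :
    IsExchangeable (Measure.pi fun _ : ι => μ) := fun σ => by
  rw [← MeasurableEquiv.coe_piCongrLeft_perm_symm]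
  exact (measurePreserving_piCongrLeft (fun _ : ι => μ) σ.symm).map_eq

theorem IsExchangeable.measure_preimage_comp_perm {ν : Measure (ι → α)} (hν : IsExchangeable ν)
    (σ : Equiv.Perm ι) (s : Set (ι → α)) : ν ((fun g => g ∘ σ) ⁻¹' s) = ν s := by
  have h := hν σ
  rw [← MeasurableEquiv.coe_piCongrLeft_perm_symm] at h ⊢
  rw [← MeasurableEquiv.map_apply, h]

variable [Fintype ι] [LinearOrder α] [TopologicalSpace α] [OrderClosedTopology α]
  [SecondCountableTopology α] [OpensMeasurableSpace α]

theorem measurableSet_lowerCount_apply_lt (j : ι) (k : ℕ) :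
    MeasurableSet {g : ι → α | lowerCount g (g j) < k} := by
  classical
  have : Measurable fun g : ι → α => lowerCount g (g j) := by
    simp only [lowerCount, card_filter]
    exact Finset.measurable_sum _ fun i _ =>
      Measurable.ite (measurableSet_lt (measurable_pi_apply i) (measurable_pi_apply j))
        measurable_const measurable_const
  exact this measurableSet_Iio

theorem IsExchangeable.natCast_le_card_mul_measure_lowerCount_lt {ν : Measure (ι → α)}
    [IsProbabilityMeasure ν] (hν : IsExchangeable ν) {k : ℕ} (hk : k ≤ Fintype.card ι) (j : ι) :
    (k : ℝ≥0∞) ≤ Fintype.card ι * ν {g | lowerCount g (g j) < k} := by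
  classical
  set E : ι → Set (ι → α) := fun j => {g | lowerCount g (g j) < k}
  have hsame (i : ι) : ν (E i) = ν (E j) := by
    have : E i = (fun g => g ∘ Equiv.swap i j) ⁻¹' E j := by
      ext g
      simp [E, lowerCount_comp_perm]
    rw [this, hν.measure_preimage_comp_perm]
  calc (k : ℝ≥0∞) = k * ν Set.univ := by simp
    _ ≤ ∑ i, ν (E i) :=
        natCast_mul_measure_univ_le_sum_measure ν (measurableSet_lowerCount_apply_lt · k)
          fun g => by simpa [E] using le_card_filter_lowerCount_lt g hk
    _ = Fintype.card ι * ν (E j) := by simp [hsame]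

end Exchangeable

theorem exchangeable_rank_bound_general {Ω : Type*} [MeasurableSpace Ω]
    (P : MeasureTheory.Measure Ω) [MeasureTheory.IsProbabilityMeasure P]
    (m : ℕ) (φ : Fin (m + 1) → Ω → ℝ)
    (hmeas : ∀ i, Measurable (φ i))
    (hindep : ProbabilityTheory.iIndepFun φ P)
    (hid : ∀ i k : Fin (m + 1),
      MeasureTheory.Measure.map (φ i) P = MeasureTheory.Measure.map (φ k) P)
    (k : ℕ) (hk1 : 1 ≤ k) (hkm : k ≤ m) :
    (k : ℝ) / ((m : ℝ) + 1) ≤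
      (P {ω | φ (Fin.last m) ω ≤ orderStat m (fun i => φ i.castSucc ω) k}).toReal := by
  have hφ : Measurable fun ω i => φ i ω := measurable_pi_lambda _ hmeas
  have := Measure.isProbabilityMeasure_map (μ := P) hφ.aemeasurable
  have := Measure.isProbabilityMeasure_map (μ := P) (hmeas 0).aemeasurable
  have hexch : IsExchangeable (P.map fun ω i => φ i ω) := by
    rw [hindep.map_fun_eq_pi_map fun i => (hmeas i).aemeasurable]
    simp_rw [hid _ 0]
    exact isExchangeable_pi _
  have hevent : {ω | φ (Fin.last m) ω ≤ orderStat m (fun i => φ i.castSucc ω) k} =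
      (fun ω i => φ i ω) ⁻¹' {g | lowerCount g (g (Fin.last m)) < k} := by
    ext ω
    rw [Set.mem_ofPred, le_orderStat_iff _ _ hk1 hkm, lowerCount_castSucc_last (φ · ω)]
    rfl
  have hbound := hexch.natCast_le_card_mul_measure_lowerCount_lt
    (by simpa using hkm.trans m.le_succ) (Fin.last m)
  rw [Measure.map_apply hφ (measurableSet_lowerCount_apply_lt _ k), ← hevent,
    Fintype.card_fin] at hbound
  rw [div_le_iff₀ (by positivity), mul_comm]
  have hreal := ENNReal.toReal_mono (by finiteness) hbound
  rwa [ENNReal.toReal_mul, ENNReal.toReal_natCast, ENNReal.toReal_natCast, Nat.cast_succ] at hreal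

/-- exchangeable rank bound. -/
theorem exchangeable_rank_bound {Ω : Type*} [MeasurableSpace Ω]
    (P : MeasureTheory.Measure Ω) [MeasureTheory.IsProbabilityMeasure P]
    (m : ℕ) (hm : 1 ≤ m) (φ : Fin (m + 1) → Ω → ℝ)
    (hmeas : ∀ i, Measurable (φ i))
    (hindep : ProbabilityTheory.iIndepFun φ P)
    (hid : ∀ i k : Fin (m + 1),
      MeasureTheory.Measure.map (φ i) P = MeasureTheory.Measure.map (φ k) P)
    (k : ℕ) (hk1 : 1 ≤ k) (hkm : k ≤ m) :
    (k : ℝ) / ((m : ℝ) + 1) ≤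
      (P {ω | φ (Fin.last m) ω ≤ orderStat m (fun i => φ i.castSucc ω) k}).toReal :=
  exchangeable_rank_bound_general P m φ hmeas hindep hid k hk1 hkm
end
end
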